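/- Let K ≥ 1 and D = diag(1/K, 1). Let Ω ⊂ ℝ² be a (δ, r₀)-Reifenberg flat domain with δ < √15/(16K). Then D⁻¹(Ω) = {D⁻¹x : x ∈ Ω} is a ((8√15/15)·Kδ, r₀)-Reifenberg flat domain. -/

import Mathlib

open Metric
open scoped RealInnerProductSpace

noncomputable section

/-- `Ω ⊂ ℝ²` is a `(δ, r₀)`-Reifenberg flat domain: it is open, `0 < δ < 1/2`, `r₀ > 0`, and
for every boundary point `x` and scale `0 < r ≤ r₀` there is a line through `x` (given by a
unit normal `n`) within Hausdorff distance `δr` of `∂Ω` inside `B(x,r)`, such that the part of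
`B(x,r)` at distance `≥ 2δr` from the line on one side lies in `Ω` and on the other side lies
in the complement of `Ω`. -/
def ReifenbergFlat (Ω : Set (EuclideanSpace ℝ (Fin 2))) (δ r₀ : ℝ) : Prop :=
  IsOpen Ω ∧ 0 < δ ∧ δ < 1 / 2 ∧ 0 < r₀ ∧
    ∀ x ∈ frontier Ω, ∀ r : ℝ, 0 < r → r ≤ r₀ →
      ∃ n : EuclideanSpace ℝ (Fin 2), ‖n‖ = 1 ∧
        Metric.hausdorffDist (frontier Ω ∩ Metric.ball x r)
          ({y | ⟪y - x, n⟫ = 0} ∩ Metric.ball x r) ≤ δ * r ∧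
        Metric.ball x r ∩ {y | 2 * δ * r ≤ ⟪y - x, n⟫} ⊆ Ω ∧
        Metric.ball x r ∩ {y | ⟪y - x, n⟫ ≤ -(2 * δ * r)} ⊆ Ωᶜ

namespace Stmt3Helper

abbrev E2 := EuclideanSpace ℝ (Fin 2)

lemma inner_two (v w : E2) : ⟪v, w⟫ = v 0 * w 0 + v 1 * w 1 := by
  simp [PiLp.inner_apply, RCLike.inner_apply, Fin.sum_univ_two]; ring

lemma norm_two (v : E2) : ‖v‖ = Real.sqrt (v 0 ^ 2 + v 1 ^ 2) := by
  rw [EuclideanSpace.norm_eq]; simp [Fin.sum_univ_two, sq_abs]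

def TK (K : ℝ) (hK : K ≠ 0) : E2 ≃ₗ[ℝ] E2 where
  toFun z := WithLp.toLp 2 ![K * z 0, z 1]
  invFun z := WithLp.toLp 2 ![z 0 / K, z 1]
  map_add' a b := by
    ext i; fin_cases i <;> (simp [Matrix.cons_val_zero, Matrix.cons_val_one]; try ring)
  map_smul' c a := by
    ext i; fin_cases i <;> (simp [Matrix.cons_val_zero, Matrix.cons_val_one]; try ring)
  left_inv z := by
    ext i; fin_cases i <;> simp [Matrix.cons_val_zero, Matrix.cons_val_one]
    · field_simp
  right_inv z := by
    ext i; fin_cases i <;> simp [Matrix.cons_val_zero, Matrix.cons_val_one]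
    · field_simp

variable {K : ℝ} (hKne : K ≠ 0)

lemma TK_apply_zero (v : E2) : (TK K hKne) v 0 = K * v 0 := rfl
lemma TK_apply_one (v : E2) : (TK K hKne) v 1 = v 1 := rfl
lemma TK_symm_apply_zero (v : E2) : (TK K hKne).symm v 0 = v 0 / K := rfl
lemma TK_symm_apply_one (v : E2) : (TK K hKne).symm v 1 = v 1 := rfl

lemma norm_TK_le (hK : 1 ≤ K) (v : E2) : ‖(TK K hKne) v‖ ≤ K * ‖v‖ := by
  have hK0 : (0:ℝ) ≤ K := by linarith
  rw [norm_two, norm_two, TK_apply_zero, TK_apply_one]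
  rw [show K * Real.sqrt (v 0 ^ 2 + v 1 ^ 2)
      = Real.sqrt (K ^ 2 * (v 0 ^ 2 + v 1 ^ 2)) by
    rw [Real.sqrt_mul (by positivity), Real.sqrt_sq hK0]]
  apply Real.sqrt_le_sqrt
  have hK2 : 1 ≤ K ^ 2 := by nlinarith
  nlinarith [mul_le_mul_of_nonneg_right hK2 (sq_nonneg (v 1))]

lemma norm_TK_symm_le (hK : 1 ≤ K) (v : E2) : ‖(TK K hKne).symm v‖ ≤ ‖v‖ := by
  rw [norm_two, norm_two, TK_symm_apply_zero, TK_symm_apply_one]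
  apply Real.sqrt_le_sqrt
  have : (v 0 / K) ^ 2 ≤ v 0 ^ 2 := by
    rw [div_pow]
    apply div_le_self (by positivity)
    nlinarith
  linarith

lemma inner_TK_symm (w n : E2) :
    ⟪(TK K hKne).symm w, n⟫ = ⟪w, (TK K hKne).symm n⟫ := by
  rw [inner_two, inner_two, TK_symm_apply_zero, TK_symm_apply_one,
    TK_symm_apply_zero, TK_symm_apply_one]
  ring

lemma abs_le_K {c K t d : ℝ} (hc0 : 0 < c) (hcK : 1 ≤ c * K) (hK0 : 0 < K)
    (hd : 0 ≤ d) (h : c * |t| ≤ d) : |t| ≤ K * d := by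
  nlinarith [abs_nonneg t, mul_le_mul_of_nonneg_left h hK0.le,
    mul_le_mul_of_nonneg_right hcK (abs_nonneg t)]

lemma norm_proj_lt {u v r : ℝ} (h : u ^ 2 ≤ v ^ 2) (hu : 0 ≤ u) (hv : 0 ≤ v)
    (hvr : v < r) : u < r := by nlinarith

lemma side_pos {c K δ δ' r t : ℝ} (hc0 : 0 < c) (hcK : 1 ≤ c * K)
    (hKδ' : K * δ ≤ δ') (hδ0 : 0 < δ) (hr : 0 < r)
    (hge : 2 * δ' * r ≤ t) : 2 * δ * r ≤ c * t := by
  have h1 : c * (2 * δ' * r) ≤ c * t := mul_le_mul_of_nonneg_left hge hc0.le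
  have h2 : c * (2 * (K * δ) * r) ≤ c * (2 * δ' * r) := by
    apply mul_le_mul_of_nonneg_left _ hc0.le
    nlinarith
  have h3 : c * (2 * (K * δ) * r) = c * K * (2 * δ * r) := by ring
  have h4 : 1 * (2 * δ * r) ≤ c * K * (2 * δ * r) :=
    mul_le_mul_of_nonneg_right hcK (by positivity)
  linarith

lemma side_neg {c K δ δ' r t : ℝ} (hc0 : 0 < c) (hcK : 1 ≤ c * K)
    (hKδ' : K * δ ≤ δ') (hδ0 : 0 < δ) (hr : 0 < r)
    (hle : t ≤ -(2 * δ' * r)) : c * t ≤ -(2 * δ * r) := by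
  have := side_pos (t := -t) hc0 hcK hKδ' hδ0 hr (by linarith)
  linarith

end Stmt3Helper

set_option maxHeartbeats 1000000 in
theorem stmt3 (K : ℝ) (hK : 1 ≤ K) (Ω : Set (EuclideanSpace ℝ (Fin 2))) (δ r₀ : ℝ)
    (hΩ : ReifenbergFlat Ω δ r₀) (hδ : δ < Real.sqrt 15 / (16 * K)) :
    ReifenbergFlat
      ((fun z : EuclideanSpace ℝ (Fin 2) =>
        (WithLp.toLp 2 ![K * z 0, z 1] : EuclideanSpace ℝ (Fin 2))) '' Ω)
      (8 * Real.sqrt 15 / 15 * (K * δ)) r₀ := by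
  obtain ⟨hopen, hδ0, hδhalf, hr0, hmain⟩ := hΩ
  have hK0 : (0:ℝ) < K := lt_of_lt_of_le one_pos hK
  have hKne : K ≠ 0 := ne_of_gt hK0
  set T : Stmt3Helper.E2 ≃ₗ[ℝ] Stmt3Helper.E2 := Stmt3Helper.TK K hKne with hTdef
  have hTfun : (fun z : EuclideanSpace ℝ (Fin 2) =>
      (WithLp.toLp 2 ![K * z 0, z 1] : EuclideanSpace ℝ (Fin 2))) = ⇑T := rfl
  rw [hTfun]
  -- numeric facts
  have hs15 : Real.sqrt 15 * Real.sqrt 15 = 15 := Real.mul_self_sqrt (by norm_num)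
  have hs15pos : 0 < Real.sqrt 15 := Real.sqrt_pos.mpr (by norm_num)
  have hs15lt4 : Real.sqrt 15 < 4 := by nlinarith
  have hs15gt3 : 3 < Real.sqrt 15 := by nlinarith
  have hKδ : K * δ < Real.sqrt 15 / 16 := by
    have h16K : (0:ℝ) < 16 * K := by positivity
    rw [lt_div_iff₀ h16K] at hδ
    nlinarith
  set δ' : ℝ := 8 * Real.sqrt 15 / 15 * (K * δ) with hδ'def
  have hδ'pos : 0 < δ' := by positivity
  have hδ'half : δ' < 1 / 2 := by nlinarith
  have h2Kδ : 2 * (K * δ) ≤ δ' := by nlinarith [mul_pos hK0 hδ0]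
  have hKδleδ' : K * δ ≤ δ' := by nlinarith [mul_pos hK0 hδ0]
  -- topology: T as homeomorphism
  have hTcont : Continuous ⇑T := T.toContinuousLinearEquiv.continuous
  have hTopen : IsOpenMap ⇑T := by
    have := T.toContinuousLinearEquiv.toHomeomorph.isOpenMap
    simpa using this
  have hfront : frontier (⇑T '' Ω) = ⇑T '' frontier Ω := by
    have := T.toContinuousLinearEquiv.toHomeomorph.image_frontier Ω
    simpa using this.symm
  -- distance contraction facts
  have hdistT : ∀ a b : Stmt3Helper.E2, dist (T a) (T b) ≤ K * dist a b := by
    intro a b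
    rw [dist_eq_norm, dist_eq_norm, ← map_sub]
    exact Stmt3Helper.norm_TK_le hKne hK _
  have hdistS : ∀ a b : Stmt3Helper.E2, dist (T.symm a) (T.symm b) ≤ dist a b := by
    intro a b
    rw [dist_eq_norm, dist_eq_norm, ← map_sub]
    exact Stmt3Helper.norm_TK_symm_le hKne hK _
  refine ⟨hTopen _ hopen, hδ'pos, hδ'half, hr0, ?_⟩
  intro x' hx' r hr hrle
  rw [hfront] at hx'
  obtain ⟨x, hx, rfl⟩ := hx'
  obtain ⟨n, hn, hH, hplus, hminus⟩ := hmain x hx r hr hrle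
  set m : Stmt3Helper.E2 := T.symm n with hmdef
  have hTm : T m = n := T.apply_symm_apply n
  set c : ℝ := ‖m‖ with hcdef
  have hc_le : c ≤ 1 := by
    have := Stmt3Helper.norm_TK_symm_le hKne hK n
    rw [hn] at this; exact this
  have hc_ge : 1 / K ≤ c := by
    have h := Stmt3Helper.norm_TK_le hKne hK m
    rw [hTm, hn] at h
    rw [div_le_iff₀ hK0]
    linarith [h, mul_comm K c]
  have hc0 : 0 < c := lt_of_lt_of_le (by positivity) hc_ge
  set n' : Stmt3Helper.E2 := c⁻¹ • m with hn'def
  have hn'1 : ‖n'‖ = 1 := by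
    rw [hn'def, norm_smul, norm_inv, Real.norm_eq_abs, abs_of_pos hc0, ← hcdef]
    field_simp
  have hinner_m : ∀ w : Stmt3Helper.E2, ⟪w, m⟫ = c * ⟪w, n'⟫ := by
    intro w
    rw [hn'def, real_inner_smul_right]
    field_simp
  have hkey : ∀ w : Stmt3Helper.E2, ⟪T.symm w, n⟫ = ⟪w, m⟫ := by
    intro w
    rw [hmdef]
    exact Stmt3Helper.inner_TK_symm hKne w n
  -- the master identity: for any w, ⟪T.symm w - x, n⟫ = c * ⟪w - T x, n'⟫
  have hmaster : ∀ w : Stmt3Helper.E2, ⟪T.symm w - x, n⟫ = c * ⟪w - T x, n'⟫ := by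
    intro w
    have h1 : T.symm w - x = T.symm (w - T x) := by
      rw [map_sub, T.symm_apply_apply]
    rw [h1, hkey, hinner_m]
  -- source sets
  set S₁ : Set Stmt3Helper.E2 := frontier Ω ∩ Metric.ball x r with hS₁
  set S₂ : Set Stmt3Helper.E2 := {y | ⟪y - x, n⟫ = 0} ∩ Metric.ball x r with hS₂
  have hxS₁ : x ∈ S₁ := ⟨hx, mem_ball_self hr⟩
  have hxS₂ : x ∈ S₂ := ⟨by simp, mem_ball_self hr⟩
  have hfin : EMetric.hausdorffEdist S₁ S₂ ≠ ⊤ :=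
    Metric.hausdorffEdist_ne_top_of_nonempty_of_bounded ⟨x, hxS₁⟩ ⟨x, hxS₂⟩
      (Metric.isBounded_ball.subset Set.inter_subset_right)
      (Metric.isBounded_ball.subset Set.inter_subset_right)
  -- key fact 1
  have hKF1 : ∀ y ∈ S₁, |⟪y - x, n⟫| ≤ δ * r := by
    intro y hy
    have h1 : Metric.infDist y S₂ ≤ δ * r :=
      le_trans (Metric.infDist_le_hausdorffDist_of_mem hy hfin) hH
    have h2 : ∀ p ∈ S₂, |⟪y - x, n⟫| ≤ dist y p := by
      rintro p ⟨hp, _⟩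
      have : ⟪y - x, n⟫ = ⟪y - p, n⟫ + ⟪p - x, n⟫ := by
        rw [← inner_add_left]; congr 1; abel
      rw [this, hp, add_zero]
      calc |⟪y - p, n⟫| ≤ ‖y - p‖ * ‖n‖ := abs_real_inner_le_norm _ _
        _ = dist y p := by rw [hn, mul_one, dist_eq_norm]
    by_contra hcon
    push_neg at hcon
    have : δ * r < Metric.infDist y S₂ := by
      obtain ⟨p, hp, hdp⟩ := (Metric.infDist_lt_iff ⟨x, hxS₂⟩).mp
        (lt_of_le_of_lt h1 hcon)
      exact absurd (h2 p hp) (not_le.mpr hdp)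
    linarith
  -- key fact 2
  have hKF2 : ∀ p ∈ S₂, Metric.infDist p S₁ ≤ δ * r := by
    intro p hp
    refine le_trans (Metric.infDist_le_hausdorffDist_of_mem hp ?_) ?_
    · rwa [EMetric.hausdorffEdist_comm]
    · rwa [Metric.hausdorffDist_comm]
  refine ⟨n', hn'1, ?_, ?_, ?_⟩
  · -- Hausdorff distance bound
    rw [hfront]
    have hcK : 1 ≤ c * K := by
      rw [div_le_iff₀ hK0] at hc_ge; linarith
    apply Metric.hausdorffDist_le_of_infDist (by positivity)
    · rintro y' ⟨hy'f, hy'b⟩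
      obtain ⟨y, hyf, rfl⟩ := hy'f
      set a : Stmt3Helper.E2 := T y - T x with hadef
      set t : ℝ := ⟪a, n'⟫ with htdef
      have hyb : y ∈ Metric.ball x r := by
        have h1 : dist (T.symm (T y)) (T.symm (T x)) ≤ dist (T y) (T x) := hdistS _ _
        rw [T.symm_apply_apply, T.symm_apply_apply] at h1
        exact mem_ball.mpr (lt_of_le_of_lt h1 (mem_ball.mp hy'b))
      have h1 : |⟪y - x, n⟫| ≤ δ * r := hKF1 y ⟨hyf, hyb⟩
      have h2 : ⟪y - x, n⟫ = c * t := by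
        have h := hmaster (T y)
        rwa [T.symm_apply_apply] at h
      have h3 : |t| ≤ K * (δ * r) := by
        refine Stmt3Helper.abs_le_K hc0 hcK hK0 (by positivity) ?_
        have habs : |c * t| = c * |t| := by rw [abs_mul, abs_of_pos hc0]
        rw [← habs, ← h2]; exact h1
      refine le_trans (Metric.infDist_le_dist_of_mem
        (?_ : T y - t • n' ∈ {y | ⟪y - T x, n'⟫ = 0} ∩ Metric.ball (T x) r)) ?_
      · constructor
        · show ⟪T y - t • n' - T x, n'⟫ = 0
          have he : T y - t • n' - T x = a - t • n' := by rw [hadef]; abel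
          rw [he, inner_sub_left, real_inner_smul_left,
            real_inner_self_eq_norm_mul_norm, hn'1]
          simp [← htdef]
        · show dist (T y - t • n') (T x) < r
          rw [dist_eq_norm]
          have he : T y - t • n' - T x = a - t • n' := by rw [hadef]; abel
          rw [he]
          have hpyth : ‖a - t • n'‖ ^ 2 = ‖a‖ ^ 2 - t ^ 2 := by
            rw [norm_sub_sq_real, real_inner_smul_right, ← htdef, norm_smul, hn'1,
              Real.norm_eq_abs, mul_one]
            rw [sq_abs]
            ring
          have hna : ‖a‖ < r := by
            rw [hadef, ← dist_eq_norm]; exact mem_ball.mp hy'b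
          refine Stmt3Helper.norm_proj_lt ?_ (norm_nonneg _) (norm_nonneg _) hna
          rw [hpyth]
          exact sub_le_self _ (sq_nonneg t)
      · rw [dist_eq_norm]
        have he : T y - (T y - t • n') = t • n' := by abel
        rw [he, norm_smul, hn'1, mul_one, Real.norm_eq_abs]
        calc |t| ≤ K * (δ * r) := h3
          _ = K * δ * r := by ring
          _ ≤ δ' * r := mul_le_mul_of_nonneg_right hKδleδ' hr.le
    · rintro p' ⟨hp'L, hp'b⟩
      have hp'L' : ⟪p' - T x, n'⟫ = 0 := hp'L
      set p : Stmt3Helper.E2 := T.symm p' with hpdef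
      have hpn : ⟪p - x, n⟫ = 0 := by
        rw [hpdef, hmaster, hp'L', mul_zero]
      have hpb : ‖p - x‖ < r := by
        have h1 : dist (T.symm p') (T.symm (T x)) ≤ dist p' (T x) := hdistS _ _
        rw [T.symm_apply_apply] at h1
        rw [hpdef, ← dist_eq_norm]
        exact lt_of_le_of_lt h1 (mem_ball.mp hp'b)
      have hp'x : ‖p' - T x‖ < r := by
        rw [← dist_eq_norm]; exact mem_ball.mp hp'b
      have hKδ4 : K * δ < 1 / 4 := by linarith
      have key : ∀ ε > 0,
          Metric.infDist p' (⇑T '' frontier Ω ∩ Metric.ball (T x) r) ≤ δ' * r + ε := by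
        intro ε hε
        set η : ℝ := min (ε / (2 * K)) (r / (4 * K)) with hηdef
        have hη0 : 0 < η := lt_min (by positivity) (by positivity)
        have hη1 : η ≤ ε / (2 * K) := min_le_left _ _
        have hη2 : η ≤ r / (4 * K) := min_le_right _ _
        have hKη : K * η ≤ r / 4 := by
          calc K * η ≤ K * (r / (4 * K)) := mul_le_mul_of_nonneg_left hη2 hK0.le
            _ = r / 4 := by field_simp
        set lam : ℝ := 1 - K * δ - K * η / r with hlamdef
        have hKηr : K * η / r ≤ 1 / 4 := by
          rw [div_le_iff₀ hr]; linarith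
        have hlam_half : 1 / 2 ≤ lam := by
          rw [hlamdef]; linarith
        have hlam1 : lam ≤ 1 := by
          rw [hlamdef]
          have h1 : (0:ℝ) ≤ K * δ := by positivity
          have h2 : (0:ℝ) ≤ K * η / r := by positivity
          linarith
        have hlam0 : (0:ℝ) < lam := lt_of_lt_of_le one_half_pos hlam_half
        set pt : Stmt3Helper.E2 := x + lam • (p - x) with hptdef
        have hptsub : pt - x = lam • (p - x) := by rw [hptdef]; abel
        have hptn : ⟪pt - x, n⟫ = 0 := by
          rw [hptsub, real_inner_smul_left, hpn, mul_zero]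
        have hptb : pt ∈ Metric.ball x r := by
          rw [mem_ball, dist_eq_norm, hptsub, norm_smul, Real.norm_eq_abs,
            abs_of_pos hlam0]
          calc lam * ‖p - x‖ ≤ 1 * ‖p - x‖ :=
              mul_le_mul_of_nonneg_right hlam1 (norm_nonneg _)
            _ = ‖p - x‖ := one_mul _
            _ < r := hpb
        have hin : Metric.infDist pt S₁ ≤ δ * r := hKF2 pt ⟨hptn, hptb⟩
        obtain ⟨y, hyS, hydist⟩ := (Metric.infDist_lt_iff ⟨x, hxS₁⟩).mp
          (lt_of_le_of_lt hin (by linarith : δ * r < δ * r + η))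
        obtain ⟨hyf, hyb⟩ := hyS
        have hTpt : T pt = T x + lam • (p' - T x) := by
          rw [hptdef, map_add, map_smul, map_sub, hpdef, T.apply_symm_apply]
        have hd1 : dist (T pt) (T x) ≤ lam * ‖p' - T x‖ := by
          rw [dist_eq_norm, hTpt]
          have he : T x + lam • (p' - T x) - T x = lam • (p' - T x) := by abel
          rw [he, norm_smul, Real.norm_eq_abs, abs_of_pos hlam0]
        have hd2 : dist (T y) (T pt) ≤ K * (δ * r + η) := by
          calc dist (T y) (T pt) ≤ K * dist y pt := hdistT _ _
            _ ≤ K * (δ * r + η) := by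
                apply mul_le_mul_of_nonneg_left _ hK0.le
                rw [dist_comm]; linarith
        have hyball : T y ∈ Metric.ball (T x) r := by
          rw [mem_ball]
          calc dist (T y) (T x) ≤ dist (T y) (T pt) + dist (T pt) (T x) :=
              dist_triangle _ _ _
            _ ≤ K * (δ * r + η) + lam * ‖p' - T x‖ := add_le_add hd2 hd1
            _ < K * (δ * r + η) + lam * r := by
                have := mul_lt_mul_of_pos_left hp'x hlam0
                linarith
            _ = r := by rw [hlamdef]; field_simp; ring
        have hmem : T y ∈ ⇑T '' frontier Ω ∩ Metric.ball (T x) r :=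
          ⟨⟨y, hyf, rfl⟩, hyball⟩
        refine le_trans (Metric.infDist_le_dist_of_mem hmem) ?_
        have hd3 : dist p' (T pt) ≤ (1 - lam) * ‖p' - T x‖ := by
          rw [dist_eq_norm, hTpt]
          have he : p' - (T x + lam • (p' - T x)) = (1 - lam) • (p' - T x) := by
            module
          rw [he, norm_smul, Real.norm_eq_abs,
            abs_of_nonneg (by linarith : (0:ℝ) ≤ 1 - lam)]
        have hfin2 : dist p' (T y) ≤ δ' * r + ε := by
          have e1 : 2 * (K * δ) * r ≤ δ' * r := mul_le_mul_of_nonneg_right h2Kδ hr.le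
          have e2a : K * η ≤ K * (ε / (2 * K)) := mul_le_mul_of_nonneg_left hη1 hK0.le
          have e2b : K * (ε / (2 * K)) = ε / 2 := by field_simp
          calc dist p' (T y) ≤ dist p' (T pt) + dist (T pt) (T y) := dist_triangle _ _ _
            _ ≤ (1 - lam) * ‖p' - T x‖ + K * (δ * r + η) := by
                have := hd2
                rw [dist_comm (T pt) (T y)]
                linarith [hd3]
            _ ≤ (1 - lam) * r + K * (δ * r + η) := by
                have := mul_le_mul_of_nonneg_left hp'x.le
                  (by linarith : (0:ℝ) ≤ 1 - lam)
                linarith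
            _ = 2 * (K * δ) * r + 2 * (K * η) := by rw [hlamdef]; field_simp; ring
            _ ≤ δ' * r + ε := by linarith
        exact hfin2
      by_contra hcon
      push_neg at hcon
      have h := key ((Metric.infDist p' (⇑T '' frontier Ω ∩ Metric.ball (T x) r)
        - δ' * r) / 2) (by linarith)
      linarith
  · -- positive side
    rintro y' ⟨hy'b, hy'ge⟩
    refine ⟨T.symm y', ?_, T.apply_symm_apply y'⟩
    apply hplus
    constructor
    · have : dist (T.symm y') x < r := by
        have h1 : dist (T.symm y') (T.symm (T x)) ≤ dist y' (T x) := hdistS _ _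
        rw [T.symm_apply_apply] at h1
        exact lt_of_le_of_lt h1 (mem_ball.mp hy'b)
      exact mem_ball.mpr this
    · show 2 * δ * r ≤ ⟪T.symm y' - x, n⟫
      rw [hmaster]
      have hcK : 1 ≤ c * K := by
        rw [div_le_iff₀ hK0] at hc_ge; linarith
      exact Stmt3Helper.side_pos hc0 hcK hKδleδ' hδ0 hr hy'ge
  · -- negative side
    rintro y' ⟨hy'b, hy'le⟩ hy'mem
    obtain ⟨z, hz, hz'⟩ := hy'mem
    have hball : T.symm y' ∈ Metric.ball x r := by
      have h1 : dist (T.symm y') (T.symm (T x)) ≤ dist y' (T x) := hdistS _ _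
      rw [T.symm_apply_apply] at h1
      exact mem_ball.mpr (lt_of_le_of_lt h1 (mem_ball.mp hy'b))
    have hineq : ⟪T.symm y' - x, n⟫ ≤ -(2 * δ * r) := by
      rw [hmaster]
      have hcK : 1 ≤ c * K := by
        rw [div_le_iff₀ hK0] at hc_ge; linarith
      exact Stmt3Helper.side_neg hc0 hcK hKδleδ' hδ0 hr hy'le
    have : T.symm y' ∈ Ωᶜ := hminus ⟨hball, hineq⟩
    apply this
    have : T.symm y' = z := by rw [← hz', T.symm_apply_apply]
    rw [this]; exact hz
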